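/- arXiv:1703.07461 — 5 statements merged into one kernel-verified Lean document; each statement's English description precedes it below -/
import Mathlib

section
/- The Powell singular function h : ℝ^4 → ℝ^4, given by h(x₁,x₂,x₃,x₄) = (x₁ + 10x₂, √5(x₃ − x₄), (x₂ − 2x₃)², √10(x₁ − x₄)²), has the unique zero 0 ∈ ℝ^4, and it is not metrically subregular around (0,0): there do not exist constants β > 0 and r > 0 such that β‖x‖ ≤ ‖h(x)‖ for all x ∈ B(0, r). -/
open Metric

/-- The Powell singular function has `0` as its unique zero but is not metrically
subregular around `(0,0)`. -/
theorem stmt_2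
    (h : EuclideanSpace ℝ (Fin 4) → EuclideanSpace ℝ (Fin 4))
    (hdef : ∀ x : EuclideanSpace ℝ (Fin 4),
      h x = (EuclideanSpace.equiv (Fin 4) ℝ).symm
        ![x 0 + 10 * x 1, Real.sqrt 5 * (x 2 - x 3),
          (x 1 - 2 * x 2) ^ 2, Real.sqrt 10 * (x 0 - x 3) ^ 2]) :
    (∀ x : EuclideanSpace ℝ (Fin 4), h x = 0 ↔ x = 0) ∧
    ¬ ∃ β > (0:ℝ), ∃ r > (0:ℝ), ∀ x : EuclideanSpace ℝ (Fin 4),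
        ‖x‖ ≤ r → β * ‖x‖ ≤ ‖h x‖ := by
  have h5 : Real.sqrt 5 > 0 := Real.sqrt_pos.mpr (by norm_num)
  have h10 : Real.sqrt 10 > 0 := Real.sqrt_pos.mpr (by norm_num)
  constructor
  · intro x
    constructor
    · intro hx
      rw [hdef x, map_eq_zero_iff _ (EuclideanSpace.equiv (Fin 4) ℝ).symm.injective] at hx
      have e0 := congrFun hx 0
      have e1 := congrFun hx 1
      have e2 := congrFun hx 2
      have e3 := congrFun hx 3
      simp only [Matrix.cons_val_zero, Matrix.cons_val_one, Matrix.head_cons,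
        Matrix.cons_val_two, Matrix.tail_cons, Matrix.cons_val_three, Pi.zero_apply] at e0 e1 e2 e3
      have e1' : x 2 - x 3 = 0 := by
        rcases mul_eq_zero.mp e1 with h' | h'
        · exact absurd h' (ne_of_gt h5)
        · exact h'
      have e2' : x 1 - 2 * x 2 = 0 := by
        have := pow_eq_zero_iff (n := 2) (by norm_num) |>.mp e2
        exact this
      have e3' : x 0 - x 3 = 0 := by
        rcases mul_eq_zero.mp e3 with h' | h'
        · exact absurd h' (ne_of_gt h10)
        · exact pow_eq_zero_iff (n := 2) (by norm_num) |>.mp h'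
      ext i
      fin_cases i
      · show x 0 = 0; linarith
      · show x 1 = 0; linarith
      · show x 2 = 0; linarith
      · show x 3 = 0; linarith
    · intro hx
      subst hx
      rw [hdef 0]
      have : (0 : EuclideanSpace ℝ (Fin 4)) 0 = 0 := rfl
      apply map_eq_zero_iff _ (EuclideanSpace.equiv (Fin 4) ℝ).symm.injective |>.mpr
      funext i
      fin_cases i <;> simp [this]
  · rintro ⟨β, hβ, r, hr, H⟩
    set t : ℝ := min (r / 11) (β / 32) with ht
    have htpos : 0 < t := lt_min (by positivity) (by positivity)
    set x : EuclideanSpace ℝ (Fin 4) :=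
      (EuclideanSpace.equiv (Fin 4) ℝ).symm ![10 * t, -t, 0, 0] with hxdef
    have hx0 : x 0 = 10 * t := rfl
    have hx1 : x 1 = -t := rfl
    have hx2 : x 2 = 0 := rfl
    have hx3 : x 3 = 0 := rfl
    have hnx : ‖x‖ = Real.sqrt (101 * t ^ 2) := by
      rw [EuclideanSpace.norm_eq, Fin.sum_univ_four, hx0, hx1, hx2, hx3]
      congr 1
      rw [Real.norm_eq_abs, Real.norm_eq_abs, Real.norm_eq_abs, sq_abs, sq_abs, sq_abs]
      ring
    have hnx_le : ‖x‖ ≤ 11 * t := by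
      rw [hnx]
      have : (101 : ℝ) * t ^ 2 ≤ (11 * t) ^ 2 := by nlinarith
      calc Real.sqrt (101 * t ^ 2) ≤ Real.sqrt ((11 * t) ^ 2) := Real.sqrt_le_sqrt this
        _ = 11 * t := Real.sqrt_sq (by positivity)
    have hnx_ge : 10 * t ≤ ‖x‖ := by
      rw [hnx]
      have : ((10 : ℝ) * t) ^ 2 ≤ 101 * t ^ 2 := by nlinarith
      calc (10 : ℝ) * t = Real.sqrt ((10 * t) ^ 2) := (Real.sqrt_sq (by positivity)).symm
        _ ≤ Real.sqrt (101 * t ^ 2) := Real.sqrt_le_sqrt this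
    have hhx : ‖h x‖ ≤ 317 * t ^ 2 := by
      rw [hdef x, hx0, hx1, hx2, hx3]
      have hcomp : ∀ i : Fin 4,
          ‖((EuclideanSpace.equiv (Fin 4) ℝ).symm
            ![10 * t + 10 * -t, Real.sqrt 5 * (0 - 0),
              (-t - 2 * 0) ^ 2, Real.sqrt 10 * (10 * t - 0) ^ 2]) i‖
          = ‖(![10 * t + 10 * -t, Real.sqrt 5 * (0 - 0),
              (-t - 2 * 0) ^ 2, Real.sqrt 10 * (10 * t - 0) ^ 2] : Fin 4 → ℝ) i‖ :=
        fun i => rfl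
      rw [EuclideanSpace.norm_eq, Fin.sum_univ_four, hcomp, hcomp, hcomp, hcomp]
      simp only [Matrix.cons_val_zero, Matrix.cons_val_one, Matrix.head_cons,
        Matrix.cons_val_two, Matrix.tail_cons, Matrix.cons_val_three]
      have hs10 : Real.sqrt 10 ^ 2 = 10 := Real.sq_sqrt (by norm_num)
      have e : ‖(10 : ℝ) * t + 10 * -t‖ ^ 2 + ‖Real.sqrt 5 * ((0:ℝ) - 0)‖ ^ 2 +
          ‖(-t - 2 * (0:ℝ)) ^ 2‖ ^ 2 + ‖Real.sqrt 10 * ((10 * t - 0:ℝ)) ^ 2‖ ^ 2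
          = 100001 * t ^ 4 := by
        have hs5 : Real.sqrt 5 ^ 2 = 5 := Real.sq_sqrt (by norm_num)
        rw [Real.norm_eq_abs, Real.norm_eq_abs, Real.norm_eq_abs, Real.norm_eq_abs,
          sq_abs, sq_abs, sq_abs, sq_abs, mul_pow, mul_pow, hs5, hs10]
        ring
      rw [e]
      have : (100001 : ℝ) * t ^ 4 ≤ (317 * t ^ 2) ^ 2 := by nlinarith
      calc Real.sqrt (100001 * t ^ 4) ≤ Real.sqrt ((317 * t ^ 2) ^ 2) := Real.sqrt_le_sqrt this
        _ = 317 * t ^ 2 := Real.sqrt_sq (by positivity)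
    have hxr : ‖x‖ ≤ r := le_trans hnx_le (by
      have : t ≤ r / 11 := min_le_left _ _
      linarith)
    have key := H x hxr
    have h1 : β * (10 * t) ≤ 317 * t ^ 2 := by
      calc β * (10 * t) ≤ β * ‖x‖ := by nlinarith
        _ ≤ ‖h x‖ := key
        _ ≤ 317 * t ^ 2 := hhx
    have h2 : t ≤ β / 32 := min_le_right _ _
    nlinarith
end

section
/- The function ĥ : ℝ → ℝ given by ĥ(x) = (3/4)·(x⁴)^{1/3} + x is metrically subregular (order δ = 1) around (0, 0): there exist β > 0 and r > 0 such that β·dist(x, Ω̂) ≤ |ĥ(x)| for all x with |x| ≤ r, where Ω̂ = {x : ĥ(x) = 0}. -/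
/-- The function `ĥ(x) = (3/4)(x⁴)^{1/3} + x` is metrically subregular (order 1)
around `(0,0)`. -/
theorem stmt_6 (g : ℝ → ℝ)
    (hdef : ∀ x : ℝ, g x = (3/4) * (x ^ 4) ^ ((1:ℝ)/3) + x) :
    ∃ β > (0:ℝ), ∃ r > (0:ℝ), ∀ x : ℝ, |x| ≤ r →
      β * Metric.infDist x {y : ℝ | g y = 0} ≤ |g x| := by
  refine ⟨1/2, by norm_num, 8/27, by norm_num, fun x hx => ?_⟩
  have h0 : g 0 = 0 := by
    rw [hdef]
    norm_num [Real.zero_rpow (by norm_num : (1:ℝ)/3 ≠ 0)]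
  have hmem : (0:ℝ) ∈ {y : ℝ | g y = 0} := h0
  have hinf : Metric.infDist x {y : ℝ | g y = 0} ≤ |x| := by
    have := Metric.infDist_le_dist_of_mem (x := x) hmem
    simpa [Real.dist_eq] using this
  have key : (1/2) * |x| ≤ |g x| := by
    rcases eq_or_ne x 0 with rfl | hx0
    · simp
    · have hax : (0:ℝ) < |x| := abs_pos.mpr hx0
      have ht : (x ^ 4 : ℝ) ^ ((1:ℝ)/3) = |x| * |x| ^ ((1:ℝ)/3) := by
        have h1 : (x ^ 4 : ℝ) = |x| ^ (4:ℕ) := by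
          rw [pow_abs, abs_of_nonneg (by positivity : (0:ℝ) ≤ x ^ 4)]
        rw [h1, ← Real.rpow_natCast |x| 4, ← Real.rpow_mul (abs_nonneg x)]
        rw [show ((4:ℕ):ℝ) * (1/3) = 1 + 1/3 by norm_num,
          Real.rpow_add hax, Real.rpow_one]
      have hroot : |x| ^ ((1:ℝ)/3) ≤ 2/3 := by
        have h8 : ((8:ℝ)/27) ^ ((1:ℝ)/3) = 2/3 := by
          rw [show (8:ℝ)/27 = (2/3) ^ (3:ℕ) by norm_num,
            ← Real.rpow_natCast ((2:ℝ)/3) 3, ← Real.rpow_mul (by norm_num)]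
          norm_num
        calc |x| ^ ((1:ℝ)/3) ≤ ((8:ℝ)/27) ^ ((1:ℝ)/3) :=
              Real.rpow_le_rpow (abs_nonneg x) hx (by norm_num)
          _ = 2/3 := h8
      have hsmall : (3/4) * (x ^ 4 : ℝ) ^ ((1:ℝ)/3) ≤ (1/2) * |x| := by
        rw [ht]
        nlinarith [abs_nonneg x]
      have hnn : (0:ℝ) ≤ (3/4) * (x ^ 4 : ℝ) ^ ((1:ℝ)/3) := by positivity
      have habs : |x| - (3/4) * (x ^ 4 : ℝ) ^ ((1:ℝ)/3) ≤ |g x| := by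
        rw [hdef]
        have := abs_add_le ((3/4) * (x ^ 4 : ℝ) ^ ((1:ℝ)/3) + x)
          (-((3/4) * (x ^ 4 : ℝ) ^ ((1:ℝ)/3)))
        simp only [abs_neg, abs_of_nonneg hnn] at this
        have h2 : |x| ≤ |(3/4) * (x ^ 4 : ℝ) ^ ((1:ℝ)/3) + x|
            + (3/4) * (x ^ 4 : ℝ) ^ ((1:ℝ)/3) := by
          simpa using this
        linarith
      linarith
  calc (1/2) * Metric.infDist x {y : ℝ | g y = 0} ≤ (1/2) * |x| := by linarith
    _ ≤ |g x| := key
end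

section
/- Let {s_k} be a nonnegative real sequence converging to 0, let ϑ ≥ 0 and α > 1, and suppose s_k^α ≤ ϑ(s_k − s_{k+1}) for all sufficiently large k. Then there exists ς > 0 such that s_k ≤ ς·k^{−1/(α−1)} for all sufficiently large k. -/
/-!
Since `α > 1`, the function `t ↦ t ^ (1 - α)` is convex, and its tangent-line inequality at `s k`
turns `s k ^ α ≤ ϑ (s k - s (k + 1))` into `s (k + 1) ^ (1 - α) ≥ s k ^ (1 - α) + (α - 1) / ϑ`.
Hence `s k ^ (1 - α)` grows at least linearly in `k`, and inverting the power gives the rate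
`s k = O(k ^ (-1 / (α - 1)))`.
-/

open Filter

/-- Bernoulli's inequality for `x / y`, rearranged as the tangent-line inequality of
`t ↦ t ^ (1 - α)` at `x`. -/
theorem rpow_one_sub_add_mul_sub_le {α x y : ℝ} (hα : 1 ≤ α) (hx : 0 < x) (hy : 0 < y) :
    x ^ (1 - α) + (α - 1) * x ^ (-α) * (x - y) ≤ y ^ (1 - α) := by
  have hbern := one_add_mul_self_le_rpow_one_add (s := x / y - 1) (by linarith [div_pos hx hy]) hα
  rw [add_sub_cancel, Real.div_rpow hx.le hy.le] at hbern
  have hX : 0 < x ^ α := Real.rpow_pos_of_pos hx α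
  have hY : 0 < y ^ α := Real.rpow_pos_of_pos hy α
  rw [Real.rpow_sub hx, Real.rpow_sub hy, Real.rpow_neg hx.le, Real.rpow_one, Real.rpow_one]
  rw [le_div_iff₀ hY] at hbern
  rw [div_add' _ _ _ hX.ne', div_le_div_iff₀ hX hY]
  field_simp at hbern ⊢
  nlinarith

theorem rpow_one_sub_add_div_le {α ϑ x y : ℝ} (hα : 1 ≤ α) (hϑ : 0 < ϑ) (hx : 0 < x) (hy : 0 < y)
    (h : x ^ α ≤ ϑ * (x - y)) : x ^ (1 - α) + (α - 1) / ϑ ≤ y ^ (1 - α) := by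
  have hinv : 1 / ϑ ≤ x ^ (-α) * (x - y) := by
    rw [div_le_iff₀ hϑ, Real.rpow_neg hx.le, mul_assoc, ← div_eq_inv_mul,
      le_div_iff₀ (Real.rpow_pos_of_pos hx α), one_mul]
    linarith
  calc x ^ (1 - α) + (α - 1) / ϑ
      = x ^ (1 - α) + (α - 1) * (1 / ϑ) := by ring
    _ ≤ x ^ (1 - α) + (α - 1) * (x ^ (-α) * (x - y)) := by gcongr
    _ = x ^ (1 - α) + (α - 1) * x ^ (-α) * (x - y) := by ring
    _ ≤ y ^ (1 - α) := rpow_one_sub_add_mul_sub_le hα hx hy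

theorem sub_mul_le_rpow_one_sub_of_rpow_le {s : ℕ → ℝ} {α ϑ : ℝ} {N : ℕ} (hs : ∀ k, 0 ≤ s k)
    (hα : 1 ≤ α) (hϑ : 0 < ϑ) (h : ∀ k ≥ N, s k ^ α ≤ ϑ * (s k - s (k + 1))) :
    ∀ k ≥ N, 0 < s k → ((k : ℝ) - N) * ((α - 1) / ϑ) ≤ s k ^ (1 - α) := by
  intro k hk
  induction k, hk using Nat.le_induction with
  | base => intro hN; simpa using Real.rpow_nonneg hN.le (1 - α)
  | succ k hk ih =>
    intro hsucc
    have hdecr : s (k + 1) ≤ s k := by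
      have := mul_nonneg_iff_of_pos_left hϑ |>.mp ((Real.rpow_nonneg (hs k) α).trans (h k hk))
      linarith
    have hpos : 0 < s k := hsucc.trans_le hdecr
    calc ((↑(k + 1) : ℝ) - N) * ((α - 1) / ϑ) = ((k : ℝ) - N) * ((α - 1) / ϑ) + (α - 1) / ϑ := by
          push_cast; ring
      _ ≤ s k ^ (1 - α) + (α - 1) / ϑ := by gcongr; exact ih hpos
      _ ≤ s (k + 1) ^ (1 - α) := rpow_one_sub_add_div_le hα hϑ hpos hsucc (h k hk)

theorem stmt_8_general (s : ℕ → ℝ) (hs : ∀ k, 0 ≤ s k)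
    (ϑ : ℝ) (hϑ : 0 ≤ ϑ)
    (α : ℝ) (hα : 1 < α)
    (hineq : ∃ N : ℕ, ∀ k ≥ N, s k ^ α ≤ ϑ * (s k - s (k + 1))) :
    ∃ ς > (0:ℝ), ∃ K : ℕ, ∀ k ≥ K, s k ≤ ς * (k : ℝ) ^ (-(1 / (α - 1))) := by
  obtain ⟨N, hN⟩ := hineq
  rcases hϑ.eq_or_lt with rfl | hϑ
  · refine ⟨1, one_pos, N, fun k hk => ?_⟩
    have hzero : s k = 0 := by
      by_contra hne
      have := Real.rpow_pos_of_pos ((hs k).lt_of_ne' hne) α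
      linarith [hN k hk]
    rw [hzero]
    positivity
  set c := (α - 1) / (2 * ϑ)
  have hc : 0 < c := div_pos (by linarith) (by positivity)
  refine ⟨c ^ (1 - α)⁻¹, by positivity, 2 * N + 1, fun k hk => ?_⟩
  rcases (hs k).eq_or_lt with hzero | hpos
  · rw [← hzero]; positivity
  have hk : (0 : ℝ) < k := by exact_mod_cast (show 0 < k by omega)
  have hlower : c * k ≤ s k ^ (1 - α) := by
    refine le_trans ?_ (sub_mul_le_rpow_one_sub_of_rpow_le hs hα.le hϑ hN k (by omega) hpos)
    have : (2 * N : ℝ) ≤ k := by exact_mod_cast (show 2 * N ≤ k by omega)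
    rw [show c * k = (k / 2) * ((α - 1) / ϑ) by simp only [c]; field_simp]
    gcongr
    linarith
  have hexp : (1 - α)⁻¹ = -(1 / (α - 1)) := by rw [← neg_sub, inv_neg, one_div]
  rw [← hexp, ← Real.mul_rpow hc.le hk.le]
  exact (Real.le_rpow_inv_iff_of_neg hpos (by positivity) (by linarith)).mpr hlower

/-- Sublinear convergence from the inequality `s_k^α ≤ ϑ(s_k - s_{k+1})` with
`α > 1`. -/
theorem stmt_8 (s : ℕ → ℝ) (hs : ∀ k, 0 ≤ s k)
    (hlim : Tendsto s atTop (nhds 0)) (ϑ : ℝ) (hϑ : 0 ≤ ϑ)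
    (α : ℝ) (hα : 1 < α)
    (hineq : ∃ N : ℕ, ∀ k ≥ N, s k ^ α ≤ ϑ * (s k - s (k + 1))) :
    ∃ ς > (0:ℝ), ∃ K : ℕ, ∀ k ≥ K, s k ≤ ς * (k : ℝ) ^ (-(1 / (α - 1))) :=
  stmt_8_general s hs ϑ hϑ α hα hineq
end

section
/- Let h : ℝ^m → ℝ^n be continuously differentiable, let μ > 0, x ∈ ℝ^m, and let d ∈ ℝ^m be the unique solution of (∇h(x)·∇h(x)ᵀ + μI)d = −∇h(x)h(x). Then ‖d‖ ≤ (1/(2√μ))·‖h(x)‖. -/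
/-!
Pairing the equation `Jᵀ(J d) + μ d = -Jᵀ y` with `d` gives
`‖J d‖² + μ‖d‖² = -⟪y, J d⟫ ≤ ‖y‖ ‖J d‖`, and since `‖y‖ s - s² ≤ ‖y‖²/4` for every real `s`,
this forces `μ‖d‖² ≤ ‖y‖²/4`.
-/

open ContinuousLinearMap

theorem le_one_div_two_mul_sqrt_mul_of_mul_sq_le {μ t b : ℝ} (hμ : 0 < μ) (ht : 0 ≤ t)
    (hb : 0 ≤ b) (h : μ * t ^ 2 ≤ b ^ 2 / 4) : t ≤ 1 / (2 * Real.sqrt μ) * b := by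
  have hsqrt : 0 < Real.sqrt μ := Real.sqrt_pos.mpr hμ
  have hsq : (2 * Real.sqrt μ * t) ^ 2 ≤ b ^ 2 := by
    rw [mul_pow, mul_pow, Real.sq_sqrt hμ.le]
    linarith
  rw [one_div_mul_eq_div, le_div_iff₀ (by positivity), mul_comm]
  exact (pow_le_pow_iff_left₀ (by positivity) hb two_ne_zero).mp hsq

section InnerProductSpace

variable {E F : Type*} [NormedAddCommGroup E] [InnerProductSpace ℝ E] [CompleteSpace E]
  [NormedAddCommGroup F] [InnerProductSpace ℝ F] [CompleteSpace F]

theorem norm_apply_sq_add_mul_norm_sq_eq_neg_inner {J : E →L[ℝ] F} {μ : ℝ} {d : E} {y : F}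
    (hd : adjoint J (J d) + μ • d = -adjoint J y) :
    ‖J d‖ ^ 2 + μ * ‖d‖ ^ 2 = -inner ℝ y (J d) := by
  have hpair := congrArg (fun v => inner ℝ v d) hd
  simp only [inner_add_left, inner_smul_left, inner_neg_left, adjoint_inner_left,
    real_inner_self_eq_norm_sq, conj_trivial] at hpair
  exact hpair

theorem norm_le_of_adjoint_apply_add_smul_eq_neg {J : E →L[ℝ] F} {μ : ℝ} (hμ : 0 < μ)
    {d : E} {y : F} (hd : adjoint J (J d) + μ • d = -adjoint J y) :
    ‖d‖ ≤ 1 / (2 * Real.sqrt μ) * ‖y‖ := by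
  have henergy := norm_apply_sq_add_mul_norm_sq_eq_neg_inner hd
  have hcs : -inner ℝ y (J d) ≤ ‖y‖ * ‖J d‖ := by
    simpa [inner_neg_left] using real_inner_le_norm (-y) (J d)
  refine le_one_div_two_mul_sqrt_mul_of_mul_sq_le hμ (norm_nonneg d) (norm_nonneg y) ?_
  nlinarith [sq_nonneg (‖J d‖ - ‖y‖ / 2)]

end InnerProductSpace

theorem stmt_11_general {m n : ℕ}
    (h : EuclideanSpace ℝ (Fin m) → EuclideanSpace ℝ (Fin n))
    (μ : ℝ) (hμ : 0 < μ)
    (x d : EuclideanSpace ℝ (Fin m))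
    (hd : ContinuousLinearMap.adjoint (fderiv ℝ h x) ((fderiv ℝ h x) d) + μ • d =
      -(ContinuousLinearMap.adjoint (fderiv ℝ h x) (h x))) :
    ‖d‖ ≤ 1 / (2 * Real.sqrt μ) * ‖h x‖ :=
  norm_le_of_adjoint_apply_add_smul_eq_neg hμ hd

/-- Bound on the Levenberg–Marquardt direction: if
`(∇h(x)∇h(x)ᵀ + μI) d = -∇h(x) h(x)` (written with the Jacobian `J = Dh(x)` as
`Jᵀ(J d) + μ d = -Jᵀ h(x)`), then `‖d‖ ≤ ‖h(x)‖/(2√μ)`. -/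
theorem stmt_11 {m n : ℕ}
    (h : EuclideanSpace ℝ (Fin m) → EuclideanSpace ℝ (Fin n))
    (hC : ContDiff ℝ 1 h) (μ : ℝ) (hμ : 0 < μ)
    (x d : EuclideanSpace ℝ (Fin m))
    (hd : ContinuousLinearMap.adjoint (fderiv ℝ h x) ((fderiv ℝ h x) d) + μ • d =
      -(ContinuousLinearMap.adjoint (fderiv ℝ h x) (h x))) :
    ‖d‖ ≤ 1 / (2 * Real.sqrt μ) * ‖h x‖ :=
  stmt_11_general h μ hμ x d hd
end

section
/- Let h : ℝ^m → ℝ^n be continuously differentiable with ∇h Hölder continuous of order υ ∈ (0,1] with constant L on B(x*, r), and suppose h is Hölder metrically subregular of order δ ∈ (0,1] around (x*,0) with constant β on B(x*, r) (i.e., β·dist(x,Ω) ≤ ‖h(x)‖^δ). If δ > 1/(1+υ), then for every x ∈ B(x*, r) sufficiently close to x*, ∇h(x)h(x) = 0 implies h(x) = 0. -/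
set_option maxHeartbeats 1000000

open Metric

/-- Under Hölder metric subregularity of order `δ > 1/(1+υ)` and Hölder continuity of
`∇h` of order `υ`, near `x*` the condition `∇h(x)h(x) = 0` implies `h(x) = 0`. -/
theorem stmt_19 {m n : ℕ}
    (h : EuclideanSpace ℝ (Fin m) → EuclideanSpace ℝ (Fin n))
    (hC : ContDiff ℝ 1 h)
    (Ω : Set (EuclideanSpace ℝ (Fin m))) (hΩ : Ω = {x | h x = 0})
    (xstar : EuclideanSpace ℝ (Fin m)) (hxstar : h xstar = 0)
    (r β L δ υ : ℝ) (hr : 0 < r) (hβ : 0 < β) (hL : 0 < L)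
    (hυ : 0 < υ) (hυ1 : υ ≤ 1) (hδ1 : δ ≤ 1) (hδ : 1 / (1 + υ) < δ)
    (hHolder : ∀ x ∈ closedBall xstar r, ∀ y ∈ closedBall xstar r,
      ‖fderiv ℝ h x - fderiv ℝ h y‖ ≤ L * ‖x - y‖ ^ υ)
    (hsub : ∀ x ∈ closedBall xstar r, β * infDist x Ω ≤ ‖h x‖ ^ δ) :
    ∃ ρ > (0:ℝ), ∀ x ∈ closedBall xstar ρ,
      ContinuousLinearMap.adjoint (fderiv ℝ h x) (h x) = 0 → h x = 0 := by
  have hυ0 : (0:ℝ) < 1 + υ := by linarith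
  -- exponent e = (υ+1)*δ - 1 > 0
  set e : ℝ := (υ + 1) * δ - 1 with he
  have hepos : 0 < e := by
    have : 1 / (1 + υ) * (1 + υ) < δ * (1 + υ) :=
      mul_lt_mul_of_pos_right hδ hυ0
    rw [one_div_mul_cancel (ne_of_gt hυ0)] at this
    simp only [he]; nlinarith
  have hLδ : 0 < L ^ δ := Real.rpow_pos_of_pos hL δ
  set c : ℝ := (β / L ^ δ) ^ (1 / e) with hc
  have hcpos : 0 < c := Real.rpow_pos_of_pos (div_pos hβ hLδ) _
  set ρ : ℝ := min (r / 2) (c / 2) with hρ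
  have hρpos : 0 < ρ := lt_min (by linarith) (by linarith)
  refine ⟨ρ, hρpos, fun x hx hadj => ?_⟩
  have hΩclosed : IsClosed Ω := by
    rw [hΩ]; exact isClosed_eq (hC.continuous) continuous_const
  have hΩne : Ω.Nonempty := ⟨xstar, by simp [hΩ, hxstar]⟩
  have hxr : x ∈ closedBall xstar r := by
    refine closedBall_subset_closedBall ?_ hx
    calc ρ ≤ r / 2 := min_le_left _ _
    _ ≤ r := by linarith
  set d : ℝ := infDist x Ω with hd
  have hd0 : 0 ≤ d := infDist_nonneg
  have hdρ : d ≤ ρ := by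
    have hxs : xstar ∈ Ω := by simp [hΩ, hxstar]
    calc d ≤ dist x xstar := infDist_le_dist_of_mem hxs
    _ ≤ ρ := mem_closedBall.mp hx
  rcases eq_or_lt_of_le hd0 with hdz | hdpos
  · -- d = 0 : x ∈ Ω
    have : x ∈ Ω := (hΩclosed.mem_iff_infDist_zero hΩne).mpr hdz.symm
    rw [hΩ] at this; exact this
  · -- d > 0 : contradiction
    exfalso
    obtain ⟨xb, hxbΩ, hxbd⟩ := hΩclosed.exists_infDist_eq_dist hΩne x
    have hxbr : xb ∈ closedBall xstar r := by
      rw [mem_closedBall]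
      have h1 : dist xb x = d := by rw [dist_comm]; exact hxbd.symm
      calc dist xb xstar ≤ dist xb x + dist x xstar := dist_triangle _ _ _
      _ ≤ d + ρ := by
          rw [h1]; exact add_le_add le_rfl (mem_closedBall.mp hx)
      _ ≤ ρ + ρ := by linarith
      _ ≤ r / 2 + r / 2 := by
          have := min_le_left (r / 2) (c / 2); simp only [hρ] at *; linarith
      _ = r := by ring
    have hdiff : Differentiable ℝ h := hC.differentiable one_ne_zero
    set A := fderiv ℝ h x with hA
    -- Taylor estimate on the segment [x, xb]
    set s : Set (EuclideanSpace ℝ (Fin m)) := segment ℝ x xb with hs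
    have hsballr : s ⊆ closedBall xstar r :=
      (convex_closedBall xstar r).segment_subset hxr hxbr
    have hsegnorm : ∀ z ∈ s, ‖z - x‖ ≤ d := by
      intro z hz
      obtain ⟨a, b, ha, hb, hab, hz⟩ := hz
      have : z - x = b • (xb - x) := by
        rw [← hz]; rw [smul_sub]
        have : a • x = (1 - b) • x := by rw [← hab]; ring_nf
        rw [this, sub_smul, one_smul]; abel
      rw [this, norm_smul, Real.norm_eq_abs, abs_of_nonneg hb]
      have hxbx : ‖xb - x‖ = d := by
        rw [← dist_eq_norm, dist_comm, ← hxbd]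
      rw [hxbx]
      nlinarith [hd0]
    have hbound : ‖h x + A (xb - x)‖ ≤ L * d ^ υ * d := by
      have key : ∀ z ∈ s, HasFDerivWithinAt (fun y => h y - A y)
          (fderiv ℝ h z - A) s z := fun z _ =>
        ((hdiff z).hasFDerivAt.sub (A.hasFDerivAt)).hasFDerivWithinAt
      have keyb : ∀ z ∈ s, ‖fderiv ℝ h z - A‖ ≤ L * d ^ υ := by
        intro z hz
        calc ‖fderiv ℝ h z - A‖ ≤ L * ‖z - x‖ ^ υ :=
              hHolder z (hsballr hz) x hxr
        _ ≤ L * d ^ υ := by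
            exact mul_le_mul_of_nonneg_left
              (Real.rpow_le_rpow (norm_nonneg _) (hsegnorm z hz) hυ.le) hL.le
      have hxseg : x ∈ s := left_mem_segment ℝ x xb
      have hxbseg : xb ∈ s := right_mem_segment ℝ x xb
      have := Convex.norm_image_sub_le_of_norm_hasFDerivWithin_le key keyb
        (convex_segment x xb) hxseg hxbseg
      have hxb0 : h xb = 0 := by rw [hΩ] at hxbΩ; exact hxbΩ
      have heq : (fun y => h y - A y) xb - (fun y => h y - A y) x
          = -(h x + A (xb - x)) := by
        simp only [hxb0, map_sub]
        abel
      rw [heq, norm_neg] at this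
      have hxbx : ‖xb - x‖ = d := by rw [← dist_eq_norm, dist_comm, ← hxbd]
      rw [hxbx] at this
      exact this
    -- orthogonality: ⟪h x, A v⟫ = 0
    have horth : (inner ℝ (h x) (A (xb - x)) : ℝ) = 0 := by
      have := ContinuousLinearMap.adjoint_inner_left A (xb - x) (h x)
      rw [hadj] at this
      simpa using this.symm
    have hnorm : ‖h x‖ ≤ L * d ^ υ * d := by
      have hsq : ‖h x + A (xb - x)‖ ^ 2
          = ‖h x‖ ^ 2 + 2 * (inner ℝ (h x) (A (xb - x)) : ℝ) + ‖A (xb - x)‖ ^ 2 :=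
        norm_add_sq_real _ _
      rw [horth] at hsq
      nlinarith [norm_nonneg (h x + A (xb - x)), norm_nonneg (h x),
        norm_nonneg (A (xb - x)), hbound]
    -- combine with subregularity
    have hmain : β * d ≤ L ^ δ * d ^ ((υ + 1) * δ) := by
      have h1 : β * d ≤ ‖h x‖ ^ δ := hsub x hxr
      have h2 : ‖h x‖ ^ δ ≤ (L * d ^ υ * d) ^ δ :=
        Real.rpow_le_rpow (norm_nonneg _) hnorm
          (le_of_lt (lt_trans (div_pos one_pos hυ0) hδ))
      have h3 : (L * d ^ υ * d) ^ δ = L ^ δ * d ^ ((υ + 1) * δ) := by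
        have hdυ : d ^ υ * d = d ^ (υ + 1) := by
          rw [Real.rpow_add hdpos, Real.rpow_one]
        rw [mul_assoc, hdυ, Real.mul_rpow hL.le (Real.rpow_nonneg hd0 _),
          ← Real.rpow_mul hd0]
      calc β * d ≤ ‖h x‖ ^ δ := h1
      _ ≤ (L * d ^ υ * d) ^ δ := h2
      _ = L ^ δ * d ^ ((υ + 1) * δ) := h3
    have hsplit : d ^ ((υ + 1) * δ) = d * d ^ e := by
      have : (υ + 1) * δ = 1 + e := by simp only [he]; ring
      rw [this, Real.rpow_add hdpos, Real.rpow_one]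
    rw [hsplit] at hmain
    -- so β ≤ L^δ * d^e
    have hβle : β ≤ L ^ δ * d ^ e := by
      have := hmain
      rw [show L ^ δ * (d * d ^ e) = (L ^ δ * d ^ e) * d by ring] at this
      exact le_of_mul_le_mul_right (by linarith [this]) hdpos
    -- but d < c gives d^e < β / L^δ
    have hdc : d < c := by
      calc d ≤ ρ := hdρ
      _ ≤ c / 2 := min_le_right _ _
      _ < c := by linarith
    have hde : d ^ e < β / L ^ δ := by
      have h1 : d ^ e < c ^ e := Real.rpow_lt_rpow hd0 hdc hepos
      have h2 : c ^ e = β / L ^ δ := by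
        rw [hc, ← Real.rpow_mul (div_pos hβ hLδ).le,
          one_div_mul_cancel (ne_of_gt hepos), Real.rpow_one]
      rwa [h2] at h1
    have : L ^ δ * d ^ e < β := by
      have := mul_lt_mul_of_pos_left hde hLδ
      rwa [mul_div_cancel₀ β (ne_of_gt hLδ)] at this
    linarith
end
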